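/- Let f ∈ B, let M ≥ 1 be an integer, let μ be a Borel probability measure on Ω, and let ε > 0. Then there exist parameters θ_m = (a_m, b_m, c_m) ∈ ℝ^N × W × ℝ^N, 1 ≤ m ≤ M, with ‖a_m‖_* (‖b_m‖_co + ‖c_m‖) ≤ ‖f‖_B for every m (i.e. ‖Θ‖_{P,∞} ≤ ‖f‖_B), such that ∫_Ω | M^{-1} ∑_{m=1}^M a_mᵀ σ(b_m * x + c_m) − f(x) |² dμ(x) ≤ (1 + ε) ‖f‖_B² / M. -/

import Mathlib

open MeasureTheory ENNReal

noncomputable section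

abbrev Vec (N : ℕ) := Fin N → ℝ

abbrev Param (N : ℕ) := Vec N × Vec N × Vec N

/-- componentwise ReLU -/
def relu {N : ℕ} (x : Vec N) : Vec N := fun i => max (x i) 0

/-- graph convolution defined via the orthogonal matrix `U` -/
def conv {N : ℕ} (U : Matrix (Fin N) (Fin N) ℝ) (b x : Vec N) : Vec N :=
  U.mulVec (U.transpose.mulVec b * U.transpose.mulVec x)

/-- The data and standing assumptions of the graph Barron space setting. -/
structure Setting (N : ℕ) where
  U : Matrix (Fin N) (Fin N) ℝ
  W : Submodule ℝ (Vec N)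
  dom : Set (Vec N)
  nrm : Vec N → ℝ
  conorm : Vec N → ℝ
  hN : 1 ≤ N
  hU : U.transpose * U = 1
  hdomc : IsCompact dom
  hdomne : dom.Nonempty
  nrm_add : ∀ x y, nrm (x + y) ≤ nrm x + nrm y
  nrm_smul : ∀ (t : ℝ) (x), nrm (t • x) = |t| * nrm x
  nrm_eq_zero : ∀ x, nrm x = 0 ↔ x = 0
  relu_nrm_le : ∀ x, nrm (relu x) ≤ nrm x
  conorm_add : ∀ b b', b ∈ W → b' ∈ W → conorm (b + b') ≤ conorm b + conorm b'
  conorm_smul : ∀ (t : ℝ) (b), b ∈ W → conorm (t • b) = |t| * conorm b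
  conorm_eq_zero : ∀ b, b ∈ W → (conorm b = 0 ↔ b = 0)
  conv_nrm_le : ∀ b ∈ W, ∀ x ∈ dom, nrm (conv U b x) ≤ conorm b

namespace Setting

variable {N : ℕ} (S : Setting N)

/-- dual norm `‖a‖_* = sup {aᵀx : ‖x‖ ≤ 1}` -/
def dual (a : Vec N) : ℝ :=
  sSup {t : ℝ | ∃ x : Vec N, S.nrm x ≤ 1 ∧ t = ∑ i, a i * x i}

/-- the neuron `aᵀ σ(b*x + c)` -/
def neuron (x : Vec N) (p : Param N) : ℝ :=
  ∑ i, p.1 i * relu (conv S.U p.2.1 x + p.2.2) i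

/-- `P_f`: probability measures on `ℝ^N × W × ℝ^N` representing `f` on `Ω`. -/
def reps (f : Vec N → ℝ) : Set (Measure (Param N)) :=
  {ρ | IsProbabilityMeasure ρ ∧ ρ {p : Param N | p.2.1 ∉ S.W} = 0 ∧
    ∀ x ∈ S.dom, Integrable (S.neuron x) ρ ∧ f x = ∫ p, S.neuron x p ∂ρ}

/-- the weight `‖a‖_* (‖b‖_co + ‖c‖)` -/
def weight (p : Param N) : ℝ := S.dual p.1 * (S.conorm p.2.1 + S.nrm p.2.2)

def cost (ρ : Measure (Param N)) : ℝ≥0∞ :=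
  ∫⁻ p, ENNReal.ofReal (S.weight p) ∂ρ

/-- the Barron norm `‖f‖_{B_1} ∈ [0,∞]` -/
def barron (f : Vec N → ℝ) : ℝ≥0∞ :=
  ⨅ ρ ∈ S.reps f, S.cost ρ

/-- membership in the Barron space `B = B_1` -/
def memB (f : Vec N → ℝ) : Prop :=
  (S.reps f).Nonempty ∧ S.barron f < ⊤

/-- `(a,b,c)` lies in `S × T` -/
def onST (p : Param N) : Prop :=
  S.dual p.1 = 1 ∧ p.2.1 ∈ S.W ∧ S.conorm p.2.1 + S.nrm p.2.2 = 1

/-- output of the shallow GCNN with parameters `θ` -/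
def netOut {M : ℕ} (θ : Fin M → Param N) (x : Vec N) : ℝ :=
  (M : ℝ)⁻¹ * ∑ m, S.neuron x (θ m)

/-- the `p`-path norm, `1 ≤ p ≤ ∞` -/
def pathNorm {M : ℕ} (p : ℝ≥0∞) (θ : Fin M → Param N) : ℝ :=
  if p = ⊤ then ⨆ m, S.weight (θ m)
  else ((M : ℝ)⁻¹ * ∑ m, S.weight (θ m) ^ p.toReal) ^ (p.toReal)⁻¹

/-- the class `C_{Q,p}` of GCNN outputs with `p`-path norm at most `Q` -/
def CQp (Q : ℝ) (p : ℝ≥0∞) : Set (Vec N → ℝ) :=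
  {g | ∃ M : ℕ, 1 ≤ M ∧ ∃ θ : Fin M → Param N,
    (∀ m, (θ m).2.1 ∈ S.W) ∧ S.pathNorm p θ ≤ Q ∧ ∀ x ∈ S.dom, g x = S.netOut θ x}

end Setting
open scoped NNReal
section NormLike

lemma normlike_sum_le {E : Type*} [AddCommGroup E] (q : E → ℝ) (h0 : q 0 = 0)
    (hadd : ∀ x y, q (x + y) ≤ q x + q y) {ι : Type*} (s : Finset ι) (g : ι → E) :
    q (∑ i ∈ s, g i) ≤ ∑ i ∈ s, q (g i) := by
  classical
  induction s using Finset.induction with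
  | empty => simp [h0]
  | @insert a s hx ih =>
      rw [Finset.sum_insert hx, Finset.sum_insert hx]
      exact le_trans (hadd _ _) (by linarith)

lemma normlike_continuous {E : Type*} [NormedAddCommGroup E] [NormedSpace ℝ E]
    [FiniteDimensional ℝ E] (q : E → ℝ) (hadd : ∀ x y, q (x + y) ≤ q x + q y)
    (hsmul : ∀ (t : ℝ) (x), q (t • x) = |t| * q x) : Continuous q := by
  have h0 : q 0 = 0 := by simpa using hsmul 0 0
  have hneg : ∀ x, q (-x) = q x := fun x => by
    have := hsmul (-1) x; simpa using this
  let b : Module.Basis (Fin (Module.finrank ℝ E)) ℝ E := Module.finBasis ℝ E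
  set L : E → ℝ := fun x => ∑ i, |b.equivFun x i| * q (b i) with hLdef
  have hqL : ∀ x, q x ≤ L x := by
    intro x
    conv_lhs => rw [← b.sum_equivFun x]
    refine le_trans (normlike_sum_le q h0 hadd _ _) ?_
    refine le_of_eq (Finset.sum_congr rfl fun i _ => ?_)
    rw [hsmul]
  have hLcont : Continuous L := by
    refine continuous_finset_sum _ fun i _ => ?_
    exact (((continuous_apply i).comp
      (b.equivFun : E →ₗ[ℝ] (Fin (Module.finrank ℝ E) → ℝ)).continuous_of_finiteDimensional).abs).mul
      continuous_const
  have hL0 : L 0 = 0 := by simp [hLdef]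
  have hdiff : ∀ x y, |q x - q y| ≤ L (x - y) := by
    intro x y
    rw [abs_sub_le_iff]
    constructor
    · have h1 : q x ≤ q y + q (x - y) := by
        have := hadd (x - y) y; rw [sub_add_cancel] at this; linarith
      have := hqL (x - y); linarith
    · have h1 : q y ≤ q x + q (x - y) := by
        have h2 := hadd (y - x) x
        rw [show y - x + x = y by abel] at h2
        rw [show x - y = -(y - x) by abel, hneg]
        linarith
      have := hqL (x - y); linarith
  rw [continuous_iff_continuousAt]
  intro y
  have hT : Filter.Tendsto (fun x => L (x - y)) (nhds y) (nhds 0) := by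
    have : Filter.Tendsto (fun x : E => x - y) (nhds y) (nhds 0) := by
      simpa using (continuous_sub_right y).tendsto y
    simpa [hL0, Function.comp_def] using hLcont.continuousAt.tendsto.comp this
  have hsq : Filter.Tendsto (fun x => dist (q x) (q y)) (nhds y) (nhds 0) := by
    refine squeeze_zero (fun x => dist_nonneg) (fun x => ?_) hT
    rw [Real.dist_eq]; exact hdiff x y
  exact tendsto_iff_dist_tendsto_zero.2 hsq

end NormLike
namespace Setting

variable {N : ℕ} (S : Setting N)

lemma nrm_zero : S.nrm 0 = 0 := by
  have := S.nrm_smul 0 0; simpa using this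

lemma nrm_neg (x : Vec N) : S.nrm (-x) = S.nrm x := by
  have := S.nrm_smul (-1) x; simpa using this

lemma nrm_nonneg (x : Vec N) : 0 ≤ S.nrm x := by
  have h := S.nrm_add x (-x)
  rw [add_neg_cancel, S.nrm_zero, S.nrm_neg] at h
  linarith

lemma nrm_continuous : Continuous S.nrm :=
  normlike_continuous S.nrm S.nrm_add S.nrm_smul

lemma nrm_pos {x : Vec N} (hx : x ≠ 0) : 0 < S.nrm x :=
  lt_of_le_of_ne (S.nrm_nonneg x) (fun h => hx ((S.nrm_eq_zero x).1 h.symm))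

lemma nrm_lower : ∃ c : ℝ, 0 < c ∧ ∀ x : Vec N, c * ‖x‖ ≤ S.nrm x := by
  have hne : Nonempty (Fin N) := ⟨⟨0, S.hN⟩⟩
  have hx₀ : (fun _ => (1:ℝ) : Vec N) ∈ Metric.sphere (0 : Vec N) 1 := by
    simp [pi_norm_const]
  obtain ⟨z, hz, hmin⟩ := (isCompact_sphere (0 : Vec N) 1).exists_isMinOn ⟨_, hx₀⟩
    S.nrm_continuous.continuousOn
  have hz1 : ‖z‖ = 1 := by simpa using hz
  have hzne : z ≠ 0 := by intro h; rw [h] at hz1; simp at hz1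
  refine ⟨S.nrm z, S.nrm_pos hzne, fun x => ?_⟩
  rcases eq_or_ne x 0 with rfl | hx
  · simp [S.nrm_zero]
  · have hnx : (0:ℝ) < ‖x‖ := norm_pos_iff.2 hx
    have hu : (‖x‖⁻¹ • x) ∈ Metric.sphere (0 : Vec N) 1 := by
      simp [norm_smul, abs_of_pos (inv_pos.2 hnx), inv_mul_cancel₀ hnx.ne']
    have h1 : S.nrm z ≤ S.nrm (‖x‖⁻¹ • x) := hmin hu
    have h2 : S.nrm (‖x‖⁻¹ • x) = ‖x‖⁻¹ * S.nrm x := by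
      rw [S.nrm_smul, abs_of_pos (inv_pos.2 hnx)]
    rw [h2] at h1
    calc S.nrm z * ‖x‖ ≤ (‖x‖⁻¹ * S.nrm x) * ‖x‖ := by
          exact mul_le_mul_of_nonneg_right h1 hnx.le
      _ = S.nrm x := by field_simp

/-! dual norm lemmas -/

lemma dual_set_nonempty (a : Vec N) :
    Set.Nonempty {t : ℝ | ∃ x : Vec N, S.nrm x ≤ 1 ∧ t = ∑ i, a i * x i} :=
  ⟨0, 0, by simp [S.nrm_zero]⟩

lemma dual_set_bddAbove (a : Vec N) :
    BddAbove {t : ℝ | ∃ x : Vec N, S.nrm x ≤ 1 ∧ t = ∑ i, a i * x i} := by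
  obtain ⟨c, hc, hcl⟩ := S.nrm_lower
  refine ⟨(∑ i, |a i|) * c⁻¹, fun t ht => ?_⟩
  obtain ⟨x, hx, rfl⟩ := ht
  have hxn : ‖x‖ ≤ c⁻¹ := by
    rw [inv_eq_one_div, le_div_iff₀ hc]
    nlinarith [hcl x]
  calc ∑ i, a i * x i ≤ ∑ i, |a i| * c⁻¹ := by
        refine Finset.sum_le_sum fun i _ => ?_
        calc a i * x i ≤ |a i * x i| := le_abs_self _
          _ = |a i| * |x i| := abs_mul _ _
          _ ≤ |a i| * c⁻¹ := by
              refine mul_le_mul_of_nonneg_left ?_ (abs_nonneg _)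
              exact le_trans (norm_le_pi_norm x i) hxn
    _ = (∑ i, |a i|) * c⁻¹ := by rw [Finset.sum_mul]

lemma le_dual {a : Vec N} {x : Vec N} (hx : S.nrm x ≤ 1) :
    ∑ i, a i * x i ≤ S.dual a :=
  le_csSup (S.dual_set_bddAbove a) ⟨x, hx, rfl⟩

lemma dual_nonneg (a : Vec N) : 0 ≤ S.dual a := by
  have := S.le_dual (a := a) (x := 0) (by simp [S.nrm_zero])
  simpa using this

lemma dual_le {a : Vec N} {K : ℝ} (h : ∀ x : Vec N, S.nrm x ≤ 1 → ∑ i, a i * x i ≤ K) :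
    S.dual a ≤ K := by
  refine csSup_le (S.dual_set_nonempty a) ?_
  rintro t ⟨x, hx, rfl⟩
  exact h x hx

lemma pair_le (a y : Vec N) : ∑ i, a i * y i ≤ S.dual a * S.nrm y := by
  rcases eq_or_ne y 0 with rfl | hy
  · simp [S.nrm_zero]
  · have hny : 0 < S.nrm y := S.nrm_pos hy
    have hx : S.nrm ((S.nrm y)⁻¹ • y) ≤ 1 := by
      rw [S.nrm_smul, abs_of_pos (inv_pos.2 hny), inv_mul_cancel₀ hny.ne']
    have h := S.le_dual (a := a) hx
    have h2 : ∑ i, a i * ((S.nrm y)⁻¹ • y) i = (S.nrm y)⁻¹ * ∑ i, a i * y i := by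
      rw [Finset.mul_sum]
      exact Finset.sum_congr rfl fun i _ => by simp [Pi.smul_apply, smul_eq_mul]; ring
    rw [h2] at h
    calc ∑ i, a i * y i = S.nrm y * ((S.nrm y)⁻¹ * ∑ i, a i * y i) := by field_simp
      _ ≤ S.nrm y * S.dual a := mul_le_mul_of_nonneg_left h hny.le
      _ = S.dual a * S.nrm y := mul_comm _ _

lemma abs_pair_le (a y : Vec N) : |∑ i, a i * y i| ≤ S.dual a * S.nrm y := by
  rw [abs_le]
  constructor
  · have h := S.pair_le a (-y)
    rw [S.nrm_neg] at h
    have : ∑ i, a i * (-y) i = -∑ i, a i * y i := by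
      rw [← Finset.sum_neg_distrib]
      exact Finset.sum_congr rfl fun i _ => by simp
    rw [this] at h; linarith
  · exact S.pair_le a y

lemma dual_zero : S.dual (0 : Vec N) = 0 := by
  refine le_antisymm (S.dual_le fun x hx => by simp) (S.dual_nonneg 0)

lemma dual_smul {t : ℝ} (ht : 0 ≤ t) (a : Vec N) : S.dual (t • a) = t * S.dual a := by
  rcases eq_or_lt_of_le ht with rfl | ht
  · simp [S.dual_zero]
  · refine le_antisymm ?_ ?_
    · refine S.dual_le fun x hx => ?_
      have : ∑ i, (t • a) i * x i = t * ∑ i, a i * x i := by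
        rw [Finset.mul_sum]
        exact Finset.sum_congr rfl fun i _ => by simp [smul_eq_mul]; ring
      rw [this]
      exact mul_le_mul_of_nonneg_left (S.le_dual (a := a) hx) ht.le
    · have h : S.dual a ≤ t⁻¹ * S.dual (t • a) := by
        refine S.dual_le fun x hx => ?_
        have : ∑ i, a i * x i = t⁻¹ * ∑ i, (t • a) i * x i := by
          rw [Finset.mul_sum]
          refine Finset.sum_congr rfl fun i _ => ?_
          simp [smul_eq_mul]
          field_simp
        rw [this]
        exact mul_le_mul_of_nonneg_left (S.le_dual (a := t • a) hx) (inv_pos.2 ht).le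
      calc t * S.dual a ≤ t * (t⁻¹ * S.dual (t • a)) := mul_le_mul_of_nonneg_left h ht.le
        _ = S.dual (t • a) := by field_simp

lemma dual_add_le (a a' : Vec N) : S.dual (a + a') ≤ S.dual a + S.dual a' := by
  refine S.dual_le fun x hx => ?_
  have : ∑ i, (a + a') i * x i = (∑ i, a i * x i) + ∑ i, a' i * x i := by
    rw [← Finset.sum_add_distrib]
    exact Finset.sum_congr rfl fun i _ => by simp [Pi.add_apply]; ring
  rw [this]
  exact add_le_add (S.le_dual (a := a) hx) (S.le_dual (a := a') hx)

lemma dual_continuous : Continuous S.dual := by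
  obtain ⟨c, hc, hcl⟩ := S.nrm_lower
  set L : Vec N → ℝ := fun v => (∑ i, |v i|) * c⁻¹ with hLdef
  have hdL : ∀ v, S.dual v ≤ L v := by
    intro v
    refine S.dual_le fun x hx => ?_
    have hxn : ‖x‖ ≤ c⁻¹ := by
      rw [inv_eq_one_div, le_div_iff₀ hc]
      nlinarith [hcl x]
    calc ∑ i, v i * x i ≤ ∑ i, |v i| * c⁻¹ := by
          refine Finset.sum_le_sum fun i _ => ?_
          calc v i * x i ≤ |v i * x i| := le_abs_self _
            _ = |v i| * |x i| := abs_mul _ _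
            _ ≤ |v i| * c⁻¹ := mul_le_mul_of_nonneg_left
                (le_trans (norm_le_pi_norm x i) hxn) (abs_nonneg _)
      _ = L v := (Finset.sum_mul _ _ _).symm
  have hLcont : Continuous L :=
    (continuous_finset_sum _ fun i _ => (continuous_apply i).abs).mul continuous_const
  have hL0 : L 0 = 0 := by simp [hLdef]
  have hdiff : ∀ x y : Vec N, |S.dual x - S.dual y| ≤ L (x - y) := by
    intro x y
    rw [abs_sub_le_iff]
    constructor
    · have h1 := S.dual_add_le (x - y) y
      rw [sub_add_cancel] at h1
      have := hdL (x - y); linarith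
    · have h1 := S.dual_add_le (y - x) x
      rw [sub_add_cancel] at h1
      have h2 : L (y - x) = L (x - y) := by
        simp only [hLdef]
        congr 1
        refine Finset.sum_congr rfl fun i _ => ?_
        rw [show (y - x) i = -((x - y) i) by simp, abs_neg]
      have := hdL (y - x); linarith
  rw [continuous_iff_continuousAt]
  intro y
  have hT : Filter.Tendsto (fun x => L (x - y)) (nhds y) (nhds 0) := by
    have h2 : Filter.Tendsto (fun x : Vec N => x - y) (nhds y) (nhds 0) := by
      simpa using (continuous_sub_right y).tendsto y
    simpa [hL0, Function.comp_def] using hLcont.continuousAt.tendsto.comp h2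
  refine tendsto_iff_dist_tendsto_zero.2 ?_
  refine squeeze_zero (fun x => dist_nonneg) (fun x => ?_) hT
  rw [Real.dist_eq]; exact hdiff x y

lemma dual_pos {a : Vec N} (ha : a ≠ 0) : 0 < S.dual a := by
  have hna : 0 < S.nrm a := S.nrm_pos ha
  have hx : S.nrm ((S.nrm a)⁻¹ • a) ≤ 1 := by
    rw [S.nrm_smul, abs_of_pos (inv_pos.2 hna), inv_mul_cancel₀ hna.ne']
  have h := S.le_dual (a := a) hx
  have h2 : ∑ i, a i * ((S.nrm a)⁻¹ • a) i = (S.nrm a)⁻¹ * ∑ i, a i * a i := by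
    rw [Finset.mul_sum]
    exact Finset.sum_congr rfl fun i _ => by simp [smul_eq_mul]; ring
  have hsum : 0 < ∑ i, a i * a i := by
    obtain ⟨j, hj⟩ := Function.ne_iff.1 ha
    refine Finset.sum_pos' (fun i _ => mul_self_nonneg _) ⟨j, Finset.mem_univ j, ?_⟩
    exact mul_self_pos.2 hj
  rw [h2] at h
  calc (0:ℝ) < (S.nrm a)⁻¹ * ∑ i, a i * a i := by positivity
    _ ≤ S.dual a := h

lemma dual_eq_zero_iff (a : Vec N) : S.dual a = 0 ↔ a = 0 := by
  constructor
  · intro h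
    by_contra ha
    exact (S.dual_pos ha).ne' h
  · rintro rfl; exact S.dual_zero

end Setting
namespace Setting

variable {N : ℕ} (S : Setting N)

lemma conorm_zero : S.conorm 0 = 0 := by
  have := S.conorm_smul 0 0 S.W.zero_mem
  simpa using this

lemma conorm_neg {b : Vec N} (hb : b ∈ S.W) : S.conorm (-b) = S.conorm b := by
  have := S.conorm_smul (-1) b hb
  simpa using this

lemma conorm_nonneg {b : Vec N} (hb : b ∈ S.W) : 0 ≤ S.conorm b := by
  have h := S.conorm_add b (-b) hb (S.W.neg_mem hb)
  rw [add_neg_cancel, S.conorm_zero, S.conorm_neg hb] at h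
  linarith

/-- a linear projection of `ℝ^N` onto `W` -/
def proj : Vec N →ₗ[ℝ] S.W :=
  (S.W.subtype.exists_leftInverse_of_injective S.W.ker_subtype).choose

lemma proj_apply_coe (w : S.W) : S.proj (w : Vec N) = w := by
  have h := (S.W.subtype.exists_leftInverse_of_injective S.W.ker_subtype).choose_spec
  have := LinearMap.ext_iff.1 h w
  simpa [Setting.proj] using this

/-- measurable extension of `conorm` agreeing with it on `W` -/
def cone : Vec N → ℝ := fun v => S.conorm (S.proj v : Vec N)

lemma cone_eq {b : Vec N} (hb : b ∈ S.W) : S.cone b = S.conorm b := by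
  have : S.proj b = ⟨b, hb⟩ := S.proj_apply_coe ⟨b, hb⟩
  simp [Setting.cone, this]

lemma cone_nonneg (v : Vec N) : 0 ≤ S.cone v :=
  S.conorm_nonneg (S.proj v).2

lemma cone_continuous : Continuous S.cone := by
  have hq : Continuous (fun w : S.W => S.conorm (w : Vec N)) := by
    refine normlike_continuous _ (fun x y => ?_) (fun t x => ?_)
    · exact_mod_cast S.conorm_add x y x.2 y.2
    · have : ((t • x : S.W) : Vec N) = t • (x : Vec N) := rfl
      rw [this]
      exact S.conorm_smul t x x.2
  exact hq.comp S.proj.continuous_of_finiteDimensional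

/-- measurable version of `weight` -/
def wfun (p : Param N) : ℝ := S.dual p.1 * (S.cone p.2.1 + S.nrm p.2.2)

lemma wfun_eq_weight {p : Param N} (hb : p.2.1 ∈ S.W) : S.wfun p = S.weight p := by
  simp [Setting.wfun, Setting.weight, S.cone_eq hb]

lemma wfun_nonneg (p : Param N) : 0 ≤ S.wfun p :=
  mul_nonneg (S.dual_nonneg _) (add_nonneg (S.cone_nonneg _) (S.nrm_nonneg _))

lemma wfun_continuous : Continuous S.wfun := by
  refine ((S.dual_continuous.comp continuous_fst).mul ?_)
  exact ((S.cone_continuous.comp (continuous_fst.comp continuous_snd)).add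
    (S.nrm_continuous.comp (continuous_snd.comp continuous_snd)))

lemma wfun_measurable : Measurable S.wfun := S.wfun_continuous.measurable

lemma weight_nonneg {p : Param N} (hb : p.2.1 ∈ S.W) : 0 ≤ S.weight p := by
  rw [← S.wfun_eq_weight hb]; exact S.wfun_nonneg p

/-! neuron lemmas -/

lemma neuron_continuous : Continuous (fun q : Vec N × Param N => S.neuron q.1 q.2) := by
  unfold Setting.neuron
  refine continuous_finset_sum _ fun i _ => ?_
  refine Continuous.mul ?_ ?_
  · exact (continuous_apply i).comp (continuous_fst.comp continuous_snd)
  · have hconv : Continuous (fun q : Vec N × Param N => conv S.U q.2.2.1 q.1) := by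
      have hmv : Continuous (S.U.mulVec ·) :=
        (Matrix.mulVecLin S.U).continuous_of_finiteDimensional
      have hmvT : Continuous (S.U.transpose.mulVec ·) :=
        (Matrix.mulVecLin S.U.transpose).continuous_of_finiteDimensional
      unfold conv
      exact hmv.comp ((hmvT.comp (continuous_fst.comp (continuous_snd.comp continuous_snd))).mul
        (hmvT.comp continuous_fst))
    have : Continuous (fun q : Vec N × Param N => relu (conv S.U q.2.2.1 q.1 + q.2.2.2) i) := by
      unfold relu
      refine Continuous.max ?_ continuous_const
      exact ((continuous_apply i).comp hconv).add
        ((continuous_apply i).comp ((continuous_snd.comp (continuous_snd.comp continuous_snd))))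
    exact this

lemma neuron_measurable2 : Measurable (fun q : Vec N × Param N => S.neuron q.1 q.2) :=
  S.neuron_continuous.measurable

lemma neuron_smul_fst (x : Vec N) (t : ℝ) (a b c : Vec N) :
    S.neuron x (t • a, b, c) = t * S.neuron x (a, b, c) := by
  simp only [Setting.neuron, Finset.mul_sum]
  exact Finset.sum_congr rfl fun i _ => by simp [smul_eq_mul]; ring

lemma neuron_abs_le {x : Vec N} (hx : x ∈ S.dom) {p : Param N} (hb : p.2.1 ∈ S.W) :
    |S.neuron x p| ≤ S.weight p := by
  obtain ⟨a, b, c⟩ := p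
  have h1 : |S.neuron x (a, b, c)| ≤ S.dual a * S.nrm (relu (conv S.U b x + c)) :=
    S.abs_pair_le a _
  have h2 : S.nrm (relu (conv S.U b x + c)) ≤ S.conorm b + S.nrm c := by
    refine le_trans (S.relu_nrm_le _) ?_
    refine le_trans (S.nrm_add _ _) ?_
    exact add_le_add (S.conv_nrm_le b hb x hx) le_rfl
  calc |S.neuron x (a, b, c)| ≤ S.dual a * S.nrm (relu (conv S.U b x + c)) := h1
    _ ≤ S.dual a * (S.conorm b + S.nrm c) :=
        mul_le_mul_of_nonneg_left h2 (S.dual_nonneg a)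
    _ = S.weight (a, b, c) := rfl

lemma neuron_eq_zero {p : Param N} (hb : p.2.1 ∈ S.W) (hw : S.weight p = 0) (x : Vec N) :
    S.neuron x p = 0 := by
  obtain ⟨a, b, c⟩ := p
  rcases mul_eq_zero.1 hw with h | h
  · have : a = 0 := (S.dual_eq_zero_iff a).1 h
    subst this
    simp [Setting.neuron]
  · have hbW : b ∈ S.W := hb
    have hb0 : S.conorm b = 0 := le_antisymm (by
      have := S.nrm_nonneg c; linarith) (S.conorm_nonneg hbW)
    have hc0 : S.nrm c = 0 := by have := S.conorm_nonneg hbW; linarith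
    have hbb : b = 0 := (S.conorm_eq_zero b hbW).1 hb0
    have hcc : c = 0 := (S.nrm_eq_zero c).1 hc0
    subst hbb; subst hcc
    have hcv : conv S.U 0 x = 0 := by
      unfold conv
      rw [Matrix.mulVec_zero, zero_mul, Matrix.mulVec_zero]
    simp [Setting.neuron, hcv, relu]

end Setting
section MeasureHelpers

open Filter

lemma integrable_of_bounded_ae {α : Type*} [MeasurableSpace α] (ν : Measure α)
    [IsFiniteMeasure ν] {F : α → ℝ} (hm : AEStronglyMeasurable F ν) {K : ℝ}
    (hb : ∀ᵐ a ∂ν, |F a| ≤ K) : Integrable F ν :=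
  Integrable.mono' (integrable_const K) hm (by simpa [Real.norm_eq_abs] using hb)

lemma ae_of_compl_subset {α : Type*} [MeasurableSpace α] (ν : Measure α) {s : Set α}
    {P : α → Prop} (h0 : ν s = 0) (h : ∀ a, ¬ P a → a ∈ s) : ∀ᵐ a ∂ν, P a := by
  rw [MeasureTheory.ae_iff]
  exact measure_mono_null (fun a ha => h a ha) h0

end MeasureHelpers

namespace Setting

variable {N : ℕ} (S : Setting N)

lemma maurey (μ : Measure (Vec N)) [IsProbabilityMeasure μ]
    (ρ : Measure (Param N)) [IsProbabilityMeasure ρ]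
    (G : Set (Param N)) (hGm : MeasurableSet G) (hGc : ρ Gᶜ = 0)
    (Q : ℝ) (hG : ∀ p ∈ G, p.2.1 ∈ S.W ∧ S.weight p ≤ Q) :
    ∀ k : ℕ, ∃ θ : Fin k → Param N, (∀ m, θ m ∈ G) ∧
      ∫ x in S.dom, ((∑ m, S.neuron x (θ m)) - k * (∫ p, S.neuron x p ∂ρ)) ^ 2 ∂μ
        ≤ k * Q ^ 2 := by
  classical
  have hdm : MeasurableSet S.dom := S.hdomc.isClosed.measurableSet
  set m' : Measure (Vec N) := μ.restrict S.dom with hm'def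
  have hm'fin : m' Set.univ ≤ 1 := by
    rw [hm'def, Measure.restrict_apply_univ]
    exact prob_le_one
  haveI : IsFiniteMeasure m' := by
    constructor; exact lt_of_le_of_lt hm'fin (by norm_num)
  have hm'one : (m' Set.univ).toReal ≤ 1 := by
    calc (m' Set.univ).toReal ≤ (1 : ℝ≥0∞).toReal := ENNReal.toReal_mono (by norm_num) hm'fin
      _ = 1 := by simp
  -- G is nonempty
  have hGne : G.Nonempty := by
    rcases Set.eq_empty_or_nonempty G with h | h
    · exfalso
      rw [h, Set.compl_empty] at hGc
      exact (IsProbabilityMeasure.ne_zero ρ) (Measure.measure_univ_eq_zero.1 hGc)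
    · exact h
  have hQ0 : 0 ≤ Q := by
    obtain ⟨p₀, hp₀⟩ := hGne
    exact le_trans (S.weight_nonneg (hG p₀ hp₀).1) (hG p₀ hp₀).2
  set g : Vec N → ℝ := fun x => ∫ p, S.neuron x p ∂ρ with hgdef
  -- basic facts
  have hncont : ∀ p : Param N, Continuous (fun x => S.neuron x p) := fun p =>
    S.neuron_continuous.comp (continuous_id.prodMk continuous_const)
  have hncontp : ∀ x : Vec N, Continuous (fun p => S.neuron x p) := fun x =>
    S.neuron_continuous.comp (continuous_const.prodMk continuous_id)
  have hnb : ∀ p ∈ G, ∀ x ∈ S.dom, |S.neuron x p| ≤ Q := fun p hp x hx =>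
    le_trans (S.neuron_abs_le hx (hG p hp).1) (hG p hp).2
  have hnae : ∀ x ∈ S.dom, ∀ᵐ p ∂ρ, |S.neuron x p| ≤ Q := by
    intro x hx
    refine ae_of_compl_subset ρ hGc fun p hp => ?_
    intro hpG
    exact hp (hnb p hpG x hx)
  have hint : ∀ x ∈ S.dom, Integrable (fun p => S.neuron x p) ρ := by
    intro x hx
    exact integrable_of_bounded_ae ρ (hncontp x).aestronglyMeasurable (K := Q) (hnae x hx)
  have hgb : ∀ x ∈ S.dom, |g x| ≤ Q := by
    intro x hx
    have h := norm_integral_le_of_norm_le_const (μ := ρ) (f := fun p => S.neuron x p) (C := Q)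
      (by simpa [Real.norm_eq_abs] using hnae x hx)
    rw [hgdef]
    simpa [Real.norm_eq_abs, measure_univ] using h
  have hgmeas : Measurable g := by
    have h : StronglyMeasurable (Function.uncurry (fun (x : Vec N) (p : Param N) =>
        S.neuron x p)) := S.neuron_continuous.stronglyMeasurable
    exact h.integral_prod_right'.measurable
  -- a helper for bounded set-integrals
  have hbint : ∀ (h : Vec N → ℝ) (K : ℝ), 0 ≤ K → (∀ x ∈ S.dom, |h x| ≤ K) →
      (∀ᵐ x ∂m', ‖h x‖ ≤ K) := by
    intro h K _ hh
    rw [hm'def]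
    refine (ae_restrict_mem hdm).mono fun x hx => ?_
    simpa [Real.norm_eq_abs] using hh x hx
  -- induction
  intro k
  induction k with
  | zero =>
      refine ⟨Fin.elim0, fun m => m.elim0, ?_⟩
      simp
  | succ k ih =>
      obtain ⟨θ, hθG, hE⟩ := ih
      set u : Vec N → ℝ := fun x => (∑ m, S.neuron x (θ m)) - (k : ℝ) * g x with hudef
      have hE' : ∫ x, (u x) ^ 2 ∂m' ≤ k * Q ^ 2 := hE
      have humeas : Measurable u := by
        refine Measurable.sub ?_ (measurable_const.mul hgmeas)
        exact Finset.measurable_sum _ fun m _ => (hncont (θ m)).measurable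
      have hub : ∀ x ∈ S.dom, |u x| ≤ 2 * k * Q := by
        intro x hx
        rw [hudef]
        have h1 : |∑ m, S.neuron x (θ m)| ≤ k * Q := by
          refine le_trans (Finset.abs_sum_le_sum_abs _ _) ?_
          calc ∑ m : Fin k, |S.neuron x (θ m)| ≤ ∑ _m : Fin k, Q :=
                Finset.sum_le_sum fun m _ => hnb (θ m) (hθG m) x hx
            _ = k * Q := by simp [Finset.sum_const, nsmul_eq_mul]
        have h2 : |(k : ℝ) * g x| ≤ k * Q := by
          rw [abs_mul, abs_of_nonneg (by positivity : (0:ℝ) ≤ (k:ℝ))]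
          exact mul_le_mul_of_nonneg_left (hgb x hx) (by positivity)
        calc |(∑ m, S.neuron x (θ m)) - (k : ℝ) * g x|
            ≤ |∑ m, S.neuron x (θ m)| + |(k : ℝ) * g x| := abs_sub _ _
          _ ≤ k * Q + k * Q := add_le_add h1 h2
          _ = 2 * k * Q := by ring
      -- the fluctuation function
      set d : Vec N × Param N → ℝ := fun q => S.neuron q.1 q.2 - g q.1 with hddef
      have hdmeas : Measurable d := S.neuron_measurable2.sub (hgmeas.comp measurable_fst)
      have hdb : ∀ x ∈ S.dom, ∀ p ∈ G, |d (x, p)| ≤ 2 * Q := by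
        intro x hx p hp
        rw [hddef]
        calc |S.neuron x p - g x| ≤ |S.neuron x p| + |g x| := abs_sub _ _
          _ ≤ Q + Q := add_le_add (hnb p hp x hx) (hgb x hx)
          _ = 2 * Q := by ring
      -- null bad set in the product
      have hbadnull : (m'.prod ρ) ((S.domᶜ ×ˢ (Set.univ : Set (Param N))) ∪
          ((Set.univ : Set (Vec N)) ×ˢ Gᶜ)) = 0 := by
        refine le_antisymm (le_trans (measure_union_le _ _) ?_) (by simp)
        have h1 : (m'.prod ρ) (S.domᶜ ×ˢ (Set.univ : Set (Param N))) = 0 := by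
          rw [Measure.prod_prod, hm'def, Measure.restrict_apply hdm.compl]
          simp
        have h2 : (m'.prod ρ) ((Set.univ : Set (Vec N)) ×ˢ Gᶜ) = 0 := by
          rw [Measure.prod_prod, hGc]
          simp
        rw [h1, h2]; simp
      have hprod_int : ∀ (H : Vec N × Param N → ℝ), Measurable H →
          ∀ K : ℝ, (∀ x ∈ S.dom, ∀ p ∈ G, |H (x, p)| ≤ K) →
          Integrable H (m'.prod ρ) := by
        intro H hHm K hHb
        refine integrable_of_bounded_ae _ hHm.aestronglyMeasurable (K := K) ?_
        refine ae_of_compl_subset _ hbadnull fun q hq => ?_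
        by_cases hx : q.1 ∈ S.dom
        · by_cases hp : q.2 ∈ G
          · exact absurd (hHb q.1 hx q.2 hp) hq
          · exact Or.inr ⟨Set.mem_univ _, hp⟩
        · exact Or.inl ⟨hx, Set.mem_univ _⟩
      -- integrability of the two product functions
      have hintUD : Integrable (fun q : Vec N × Param N => u q.1 * d q) (m'.prod ρ) := by
        refine hprod_int _ ((humeas.comp measurable_fst).mul hdmeas) ((2*k*Q) * (2*Q)) ?_
        intro x hx p hp
        rw [abs_mul]
        exact mul_le_mul (hub x hx) (hdb x hx p hp) (abs_nonneg _) (by positivity)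
      have hintD2 : Integrable (fun q : Vec N × Param N => (d q)^2) (m'.prod ρ) := by
        refine hprod_int _ (hdmeas.pow_const 2) ((2*Q)^2) ?_
        intro x hx p hp
        rw [abs_pow]
        exact pow_le_pow_left₀ (abs_nonneg _) (hdb x hx p hp) 2
      -- cross term is zero
      have hcross : ∫ p, (∫ x, u x * d (x, p) ∂m') ∂ρ = 0 := by
        have hswap := MeasureTheory.integral_integral_swap
          (f := fun (p : Param N) (x : Vec N) => u x * d (x, p)) (μ := ρ) (ν := m')
          (by exact hintUD.swap)
        rw [hswap]
        have hinner : ∀ᵐ x ∂m', (∫ p, u x * d (x, p) ∂ρ) = 0 := by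
          rw [hm'def]
          refine (ae_restrict_mem hdm).mono fun x hx => ?_
          have h1 : ∫ p, u x * d (x, p) ∂ρ = u x * ∫ p, d (x, p) ∂ρ :=
            integral_const_mul _ _
          have h2 : ∫ p, d (x, p) ∂ρ = 0 := by
            rw [hddef]
            simp only
            rw [integral_sub (hint x hx) (integrable_const _), integral_const]
            simp [hgdef, measure_univ]
          rw [h1, h2, mul_zero]
        calc ∫ x, (∫ p, u x * d (x, p) ∂ρ) ∂m'
            = ∫ x, (0:ℝ) ∂m' := integral_congr_ae hinner
          _ = 0 := by simp
      -- variance term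
      have hvar : ∫ p, (∫ x, (d (x, p))^2 ∂m') ∂ρ ≤ Q^2 := by
        have hswap := MeasureTheory.integral_integral_swap
          (f := fun (p : Param N) (x : Vec N) => (d (x, p))^2) (μ := ρ) (ν := m')
          (by exact hintD2.swap)
        rw [hswap]
        have hintinner : Integrable (fun x => ∫ p, (d (x, p))^2 ∂ρ) m' := by
          have := hintD2.integral_prod_left
          simpa using this
        have hinner : ∀ᵐ x ∂m', (∫ p, (d (x, p))^2 ∂ρ) ≤ Q^2 := by
          rw [hm'def]
          refine (ae_restrict_mem hdm).mono fun x hx => ?_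
          have hi1 : Integrable (fun p => S.neuron x p) ρ := hint x hx
          have hi2 : Integrable (fun p => (S.neuron x p)^2) ρ := by
            refine integrable_of_bounded_ae ρ ((hncontp x).pow 2).aestronglyMeasurable
              (K := Q^2) ?_
            refine (hnae x hx).mono fun p hp => ?_
            rw [abs_pow]
            exact pow_le_pow_left₀ (abs_nonneg _) hp 2
          have hexp : (fun p => (d (x, p))^2) =
              fun p => (S.neuron x p)^2 - 2 * g x * S.neuron x p + (g x)^2 := by
            funext p
            rw [hddef]; ring
          have hval : ∫ p, (d (x, p))^2 ∂ρ = (∫ p, (S.neuron x p)^2 ∂ρ) - (g x)^2 := by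
            have hi4 : Integrable (fun p => 2 * g x * S.neuron x p) ρ := by
              exact hi1.const_mul (2 * g x)
            have hi3 : Integrable (fun p => (S.neuron x p)^2 - 2 * g x * S.neuron x p) ρ := by
              exact hi2.sub hi4
            rw [hexp]
            rw [integral_add hi3 (integrable_const _)]
            rw [integral_sub hi2 hi4]
            rw [integral_const_mul, integral_const]
            have hgx : ∫ p, S.neuron x p ∂ρ = g x := rfl
            rw [hgx]
            simp [measure_univ]
            ring
          rw [hval]
          have hn2 : ∫ p, (S.neuron x p)^2 ∂ρ ≤ Q^2 := by
            have := integral_mono_ae hi2 (integrable_const (Q^2))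
              (by
                refine (hnae x hx).mono fun p hp => ?_
                show (S.neuron x p)^2 ≤ Q^2
                rw [← sq_abs]
                exact pow_le_pow_left₀ (abs_nonneg _) hp 2)
            simpa [measure_univ] using this
          nlinarith [sq_nonneg (g x)]
        calc ∫ x, (∫ p, (d (x, p))^2 ∂ρ) ∂m'
            ≤ ∫ _x, Q^2 ∂m' := integral_mono_ae hintinner (integrable_const _) hinner
          _ = Q^2 * (m' Set.univ).toReal := by rw [integral_const]; rw [smul_eq_mul, mul_comm]; rfl
          _ ≤ Q^2 * 1 := mul_le_mul_of_nonneg_left hm'one (by positivity)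
          _ = Q^2 := mul_one _
      -- decomposition of the one-step objective
      set A : Param N → ℝ := fun p => ∫ x, u x * d (x, p) ∂m' with hAdef
      set V : Param N → ℝ := fun p => ∫ x, (d (x, p))^2 ∂m' with hVdef
      set F : Param N → ℝ := fun p => ∫ x, (u x + d (x, p))^2 ∂m' with hFdef
      set E : ℝ := ∫ x, (u x)^2 ∂m' with hEdef
      have hE0 : 0 ≤ E := integral_nonneg fun x => sq_nonneg _
      -- measurability of parameter integrals
      have hAmeas : Measurable A := by
        have h : StronglyMeasurable (fun q : Param N × Vec N => u q.2 * d (q.2, q.1)) :=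
          ((humeas.comp measurable_snd).mul
            (hdmeas.comp (measurable_snd.prodMk measurable_fst))).stronglyMeasurable
        exact h.integral_prod_right'.measurable
      have hVmeas : Measurable V := by
        have h : StronglyMeasurable (fun q : Param N × Vec N => (d (q.2, q.1))^2) :=
          ((hdmeas.comp (measurable_snd.prodMk measurable_fst)).pow_const 2).stronglyMeasurable
        exact h.integral_prod_right'.measurable
      have hFmeas : Measurable F := by
        have h : StronglyMeasurable (fun q : Param N × Vec N => (u q.2 + d (q.2, q.1))^2) :=
          (((humeas.comp measurable_snd).add
            (hdmeas.comp (measurable_snd.prodMk measurable_fst))).pow_const 2).stronglyMeasurable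
        exact h.integral_prod_right'.measurable
      -- pointwise integrability over m' for p ∈ G
      have hup2int : Integrable (fun x => (u x)^2) m' := by
        refine integrable_of_bounded_ae m' ((humeas.pow_const 2)).aestronglyMeasurable
          (K := (2*k*Q)^2) ?_
        refine hbint _ _ (by positivity) fun x hx => ?_
        rw [abs_pow]
        exact pow_le_pow_left₀ (abs_nonneg _) (hub x hx) 2
      have hudint : ∀ p ∈ G, Integrable (fun x => u x * d (x, p)) m' := by
        intro p hp
        refine integrable_of_bounded_ae m'
          ((humeas.mul ((hdmeas.comp (measurable_id.prodMk measurable_const)))).aestronglyMeasurable)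
          (K := (2*k*Q) * (2*Q)) ?_
        refine hbint _ _ (by positivity) fun x hx => ?_
        rw [abs_mul]
        exact mul_le_mul (hub x hx) (hdb x hx p hp) (abs_nonneg _) (by positivity)
      have hd2int : ∀ p ∈ G, Integrable (fun x => (d (x, p))^2) m' := by
        intro p hp
        refine integrable_of_bounded_ae m'
          (((hdmeas.comp (measurable_id.prodMk measurable_const)).pow_const 2).aestronglyMeasurable)
          (K := (2*Q)^2) ?_
        refine hbint _ _ (by positivity) fun x hx => ?_
        rw [abs_pow]
        exact pow_le_pow_left₀ (abs_nonneg _) (hdb x hx p hp) 2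
      -- F decomposes on G
      have hFdec : ∀ p ∈ G, F p = E + (2 * A p + V p) := by
        intro p hp
        rw [hFdef]
        simp only
        have hexp : (fun x => (u x + d (x, p))^2) =
            fun x => (u x)^2 + (2 * (u x * d (x, p)) + (d (x, p))^2) := by
          funext x; ring
        rw [hexp]
        have hj1 : Integrable (fun x => 2 * (u x * d (x, p))) m' := by
          exact (hudint p hp).const_mul 2
        have hj2 : Integrable (fun x => 2 * (u x * d (x, p)) + (d (x, p))^2) m' := by
          exact hj1.add (hd2int p hp)
        rw [integral_add hup2int hj2]
        rw [integral_add hj1 (hd2int p hp)]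
        rw [integral_const_mul]
      -- bounds for A and V on G
      have hAb : ∀ p ∈ G, |A p| ≤ (2*k*Q) * (2*Q) := by
        intro p hp
        rw [hAdef]
        have h := norm_integral_le_of_norm_le_const (μ := m')
          (f := fun x => u x * d (x, p)) (C := (2*k*Q) * (2*Q))
          (hbint _ _ (by positivity) fun x hx => by
            rw [abs_mul]
            exact mul_le_mul (hub x hx) (hdb x hx p hp) (abs_nonneg _) (by positivity))
        rw [Real.norm_eq_abs] at h
        calc |∫ x, u x * d (x, p) ∂m'| ≤ (2*k*Q) * (2*Q) * (m' Set.univ).toReal := h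
          _ ≤ (2*k*Q) * (2*Q) * 1 := mul_le_mul_of_nonneg_left hm'one (by positivity)
          _ = (2*k*Q) * (2*Q) := mul_one _
      have hVb : ∀ p ∈ G, |V p| ≤ (2*Q)^2 := by
        intro p hp
        rw [hVdef]
        have h := norm_integral_le_of_norm_le_const (μ := m')
          (f := fun x => (d (x, p))^2) (C := (2*Q)^2)
          (hbint _ _ (by positivity) fun x hx => by
            rw [abs_pow]
            exact pow_le_pow_left₀ (abs_nonneg _) (hdb x hx p hp) 2)
        rw [Real.norm_eq_abs] at h
        calc |∫ x, (d (x, p))^2 ∂m'| ≤ (2*Q)^2 * (m' Set.univ).toReal := h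
          _ ≤ (2*Q)^2 * 1 := mul_le_mul_of_nonneg_left hm'one (by positivity)
          _ = (2*Q)^2 := mul_one _
      -- integrability over ρ
      have hAint : Integrable A ρ := by
        refine integrable_of_bounded_ae ρ hAmeas.aestronglyMeasurable (K := (2*k*Q) * (2*Q)) ?_
        refine ae_of_compl_subset ρ hGc fun p hp hpG => hp (hAb p hpG)
      have hVint : Integrable V ρ := by
        refine integrable_of_bounded_ae ρ hVmeas.aestronglyMeasurable (K := (2*Q)^2) ?_
        refine ae_of_compl_subset ρ hGc fun p hp hpG => hp (hVb p hpG)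
      have hGae : ∀ᵐ p ∂ρ, p ∈ G :=
        ae_of_compl_subset ρ hGc fun p hp => hp
      have hFint : Integrable F ρ := by
        have hj1 : Integrable (fun p => E + (2 * A p + V p)) ρ := by
          exact (integrable_const E).add ((hAint.const_mul 2).add hVint)
        refine Integrable.congr hj1 ?_
        exact hGae.mono fun p hp => (hFdec p hp).symm
      have hFavg : ∫ p, F p ∂ρ ≤ E + Q^2 := by
        have h1 : ∫ p, F p ∂ρ = ∫ p, (E + (2 * A p + V p)) ∂ρ :=
          integral_congr_ae (hGae.mono fun p hp => hFdec p hp)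
        rw [h1]
        have hj1 : Integrable (fun p => 2 * A p) ρ := by exact hAint.const_mul 2
        have hj2 : Integrable (fun p => 2 * A p + V p) ρ := by exact hj1.add hVint
        rw [integral_add (integrable_const E) hj2]
        rw [integral_add hj1 hVint]
        rw [integral_const_mul, integral_const]
        have hA0 : ∫ p, A p ∂ρ = 0 := hcross
        have hV0 : ∫ p, V p ∂ρ ≤ Q^2 := hvar
        rw [hA0]
        simp [measure_univ]
        linarith
      -- pick a good point
      obtain ⟨p, hpGc, hpF⟩ := exists_notMem_null_le_integral (μ := ρ) hFint hGc
      have hpG : p ∈ G := not_not.1 hpGc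
      refine ⟨Fin.snoc θ p, ?_, ?_⟩
      · intro m
        refine Fin.lastCases ?_ ?_ m
        · rw [Fin.snoc_last]; exact hpG
        · intro i; rw [Fin.snoc_castSucc]; exact hθG i
      · have hsum : ∀ x, (∑ m : Fin (k+1), S.neuron x ((Fin.snoc θ p : Fin (k+1) → Param N) m)) =
            (∑ m : Fin k, S.neuron x (θ m)) + S.neuron x p := by
          intro x
          rw [Fin.sum_univ_castSucc]
          simp [Fin.snoc_castSucc, Fin.snoc_last]
        have hpt : ∀ x, ((∑ m : Fin (k+1), S.neuron x ((Fin.snoc θ p : Fin (k+1) → Param N) m)) -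
            ((k:ℕ)+1 : ℕ) * g x)^2 = (u x + d (x, p))^2 := by
          intro x
          rw [hsum, hudef, hddef]
          simp only
          push_cast
          ring
        calc ∫ x, ((∑ m : Fin (k+1), S.neuron x ((Fin.snoc θ p : Fin (k+1) → Param N) m)) -
              ((k:ℕ)+1 : ℕ) * g x)^2 ∂m'
            = ∫ x, (u x + d (x, p))^2 ∂m' :=
              integral_congr_ae (Filter.Eventually.of_forall fun x => hpt x)
          _ = F p := rfl
          _ ≤ ∫ p, F p ∂ρ := hpF
          _ ≤ E + Q^2 := hFavg
          _ ≤ k * Q^2 + Q^2 := by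
              have : E ≤ k * Q^2 := hE'
              linarith
          _ = ((k:ℕ)+1 : ℕ) * Q^2 := by push_cast; ring

end Setting
lemma add_sq_le_weighted {l a b : ℝ} (hl : 0 < l) :
    (a + b)^2 ≤ (1 + l) * a^2 + (1 + 1/l) * b^2 := by
  have h1 : l*a^2 - 2*a*b + b^2/l = (l*a - b)^2/l := by field_simp; ring
  have h2 : 0 ≤ (l*a - b)^2/l := div_nonneg (sq_nonneg _) hl.le
  have h3 : 0 ≤ l*a^2 - 2*a*b + b^2/l := h1 ▸ h2
  have h4 : (1 + 1/l) * b^2 = b^2 + b^2/l := by field_simp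
  nlinarith [h3, h4]
set_option maxHeartbeats 2000000 in
/-- integrated-square approximation of `f ∈ B` by a shallow GCNN with `M`
neurons and `∞`-path norm at most `‖f‖_B`. -/
theorem l2_approximation {N : ℕ} (S : Setting N) (f : Vec N → ℝ) (hf : S.memB f)
    (M : ℕ) (hM : 1 ≤ M) (μ : Measure (Vec N)) [IsProbabilityMeasure μ]
    (hμ : μ S.domᶜ = 0) (ε : ℝ) (hε : 0 < ε) :
    ∃ θ : Fin M → Param N, (∀ m, (θ m).2.1 ∈ S.W) ∧
      (∀ m, S.weight (θ m) ≤ (S.barron f).toReal) ∧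
      ∫ x in S.dom, (S.netOut θ x - f x) ^ 2 ∂μ
        ≤ (1 + ε) * (S.barron f).toReal ^ 2 / M := by
  classical
  obtain ⟨hne, hlt⟩ := hf
  have hdm : MeasurableSet S.dom := S.hdomc.isClosed.measurableSet
  set B := (S.barron f).toReal with hBdef
  have hB0 : 0 ≤ B := ENNReal.toReal_nonneg
  have hM0 : (0:ℝ) < M := by exact_mod_cast Nat.lt_of_lt_of_le Nat.zero_lt_one hM
  have hMne : (M:ℝ) ≠ 0 := hM0.ne'
  rcases eq_or_lt_of_le hB0 with hB | hB
  · -- degenerate case `B = 0`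
    have hbar0 : S.barron f = 0 := by
      rcases (ENNReal.toReal_eq_zero_iff _).1 hB.symm with h | h
      · exact h
      · exact absurd h hlt.ne
    have hf0 : ∀ x ∈ S.dom, f x = 0 := by
      intro x hx
      have hkey : ∀ δ : ℝ, 0 < δ → |f x| ≤ δ := by
        intro δ hδ
        have hlt2 : S.barron f < ENNReal.ofReal δ := by
          rw [hbar0]; exact ENNReal.ofReal_pos.2 hδ
        unfold Setting.barron at hlt2
        rw [iInf_lt_iff] at hlt2
        obtain ⟨ρ, hρ⟩ := hlt2
        rw [iInf_lt_iff] at hρ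
        obtain ⟨hρm, hρc⟩ := hρ
        obtain ⟨hρprob, hρnull, hρrep⟩ := hρm
        haveI := hρprob
        have hWae : ∀ᵐ p ∂ρ, p.2.1 ∈ S.W :=
          ae_of_compl_subset ρ hρnull fun p hp => hp
        have hfeq : f x = ∫ p, S.neuron x p ∂ρ := (hρrep x hx).2
        have h1 : |f x| ≤ (∫⁻ p, ENNReal.ofReal ‖S.neuron x p‖ ∂ρ).toReal := by
          rw [hfeq, ← Real.norm_eq_abs]
          exact norm_integral_le_lintegral_norm _
        have h2 : (∫⁻ p, ENNReal.ofReal ‖S.neuron x p‖ ∂ρ) ≤ S.cost ρ := by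
          refine lintegral_mono_ae (hWae.mono fun p hp => ?_)
          exact ENNReal.ofReal_le_ofReal (by
            rw [Real.norm_eq_abs]; exact S.neuron_abs_le hx hp)
        have h3 : (∫⁻ p, ENNReal.ofReal ‖S.neuron x p‖ ∂ρ) ≤ ENNReal.ofReal δ :=
          le_trans h2 hρc.le
        exact le_trans h1 (ENNReal.toReal_le_of_le_ofReal hδ.le h3)
      by_contra hfx
      have habs : 0 < |f x| := abs_pos.2 hfx
      have h := hkey (|f x| / 2) (by positivity)
      linarith
    refine ⟨fun _ => ((0:Vec N), (0:Vec N), (0:Vec N)), fun m => S.W.zero_mem, ?_, ?_⟩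
    · intro m
      have : S.weight ((0:Vec N), (0:Vec N), (0:Vec N)) = 0 := by
        simp [Setting.weight, S.dual_zero]
      rw [this]
      exact ENNReal.toReal_nonneg
    · have hzero : Set.EqOn
          (fun x => (S.netOut (fun _ : Fin M => ((0:Vec N), (0:Vec N), (0:Vec N))) x - f x)^2)
          (fun _ => (0:ℝ)) S.dom := by
        intro x hx
        simp only
        rw [hf0 x hx]
        simp [Setting.netOut, Setting.neuron]
      rw [setIntegral_congr_fun hdm hzero]
      simp only [integral_zero]
      rw [← hB]
      norm_num
  · -- main case `0 < B`
    have hBfin : S.barron f ≠ ⊤ := hlt.ne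
    have hofB : ENNReal.ofReal B = S.barron f := ENNReal.ofReal_toReal hBfin
    set η : ℝ := Real.sqrt (ε * B^2 / (2 * M * (1 + 2/ε))) with hηdef
    have harg : 0 < ε * B^2 / (2 * M * (1 + 2/ε)) := by positivity
    have hη : 0 < η := Real.sqrt_pos.2 harg
    have hη2 : (1 + 2/ε) * η^2 = ε * B^2 / (2*M) := by
      rw [hηdef, Real.sq_sqrt harg.le]
      field_simp
    -- near-optimal representing measure
    have hlt2 : S.barron f < ENNReal.ofReal (B + η) := by
      rw [← hofB]
      exact (ENNReal.ofReal_lt_ofReal_iff_of_nonneg hB0).2 (by linarith)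
    unfold Setting.barron at hlt2
    rw [iInf_lt_iff] at hlt2
    obtain ⟨ρ, hρ⟩ := hlt2
    rw [iInf_lt_iff] at hρ
    obtain ⟨hρm, hρc⟩ := hρ
    have hρmem := hρm
    obtain ⟨hρprob, hρnull, hρrep⟩ := hρm
    haveI := hρprob
    have hWae : ∀ᵐ p ∂ρ, p.2.1 ∈ S.W := ae_of_compl_subset ρ hρnull fun p hp => hp
    have hcostfin : S.cost ρ ≠ ⊤ := (lt_of_lt_of_le hρc le_top).ne
    set C : ℝ := (S.cost ρ).toReal with hCdef
    have hofC : ENNReal.ofReal C = S.cost ρ := ENNReal.ofReal_toReal hcostfin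
    have hBC : B ≤ C := by
      have h1 : S.barron f ≤ S.cost ρ := iInf₂_le ρ hρmem
      exact ENNReal.toReal_mono hcostfin h1
    have hC0 : 0 < C := lt_of_lt_of_le hB hBC
    have hCB : C < B + η := ENNReal.toReal_lt_of_lt_ofReal hρc
    -- cost via the measurable weight proxy
    have hwcost : ∫⁻ p, ENNReal.ofReal (S.wfun p) ∂ρ = S.cost ρ := by
      refine lintegral_congr_ae (hWae.mono fun p hp => ?_)
      show ENNReal.ofReal (S.wfun p) = ENNReal.ofReal (S.weight p)
      rw [S.wfun_eq_weight hp]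
    -- reweighted and rescaled measure
    set dens : Param N → ℝ≥0 := fun p => Real.toNNReal (S.wfun p / C) with hdensdef
    have hdensmeas : Measurable dens := (S.wfun_measurable.div_const C).real_toNNReal
    set ν : Measure (Param N) := ρ.withDensity (fun p => (dens p : ℝ≥0∞)) with hνdef
    have hdenseq : ∀ p, ((dens p : ℝ≥0) : ℝ≥0∞) = ENNReal.ofReal (S.wfun p / C) :=
      fun p => rfl
    have hν_univ : ν Set.univ = 1 := by
      rw [hνdef, withDensity_apply _ MeasurableSet.univ, setLIntegral_univ]
      calc ∫⁻ p, ((dens p : ℝ≥0) : ℝ≥0∞) ∂ρ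
          = ∫⁻ p, ENNReal.ofReal (S.wfun p) * (ENNReal.ofReal C)⁻¹ ∂ρ := by
            refine lintegral_congr fun p => ?_
            rw [hdenseq, ENNReal.ofReal_div_of_pos hC0, ENNReal.div_eq_inv_mul]
            ring
        _ = (∫⁻ p, ENNReal.ofReal (S.wfun p) ∂ρ) * (ENNReal.ofReal C)⁻¹ :=
            lintegral_mul_const _ S.wfun_measurable.ennreal_ofReal
        _ = (ENNReal.ofReal C) * (ENNReal.ofReal C)⁻¹ := by rw [hwcost, hofC]
        _ = 1 := ENNReal.mul_inv_cancel
            (by simpa using (ENNReal.ofReal_pos.2 hC0).ne') ENNReal.ofReal_ne_top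
    haveI hνprob : IsProbabilityMeasure ν := ⟨hν_univ⟩
    -- rescaling map
    set T : Param N → Param N := fun p => ((B / S.wfun p) • p.1, p.2.1, p.2.2) with hTdef
    have hTmeas : Measurable T := by
      refine Measurable.prodMk ?_ (Measurable.prodMk ?_ ?_)
      · exact (measurable_const.div S.wfun_measurable).smul measurable_fst
      · exact measurable_fst.comp measurable_snd
      · exact measurable_snd.comp measurable_snd
    set ρ'' : Measure (Param N) := ν.map T with hρ''def
    haveI : IsProbabilityMeasure ρ'' := Measure.isProbabilityMeasure_map hTmeas.aemeasurable
    -- the good set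
    have hWclosed : IsClosed (S.W : Set (Vec N)) := Submodule.closed_of_finiteDimensional S.W
    set Gd : Set (Param N) := {p | p.2.1 ∈ S.W ∧ S.wfun p = B} with hGddef
    have hGdm : MeasurableSet Gd := by
      have : Gd = ((fun p : Param N => p.2.1) ⁻¹' (S.W : Set (Vec N))) ∩ (S.wfun ⁻¹' {B}) := by
        ext p; simp [hGddef]
      rw [this]
      exact MeasurableSet.inter
        ((measurable_fst.comp measurable_snd) hWclosed.measurableSet)
        (S.wfun_measurable (measurableSet_singleton B))
    have hGdprop : ∀ p ∈ Gd, p.2.1 ∈ S.W ∧ S.weight p ≤ B := by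
      intro p hp
      exact ⟨hp.1, le_of_eq ((S.wfun_eq_weight hp.1).symm.trans hp.2)⟩
    have hGdc : ρ'' Gdᶜ = 0 := by
      rw [hρ''def, Measure.map_apply hTmeas hGdm.compl]
      have hsub : T ⁻¹' Gdᶜ ⊆ {p : Param N | p.2.1 ∉ S.W} ∪ {p : Param N | S.wfun p = 0} := by
        intro p hp
        by_cases hW : p.2.1 ∈ S.W
        · by_cases hw : S.wfun p = 0
          · exact Or.inr hw
          · exfalso
            apply hp
            have hwpos : 0 < S.wfun p := lt_of_le_of_ne (S.wfun_nonneg p) (Ne.symm hw)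
            refine ⟨hW, ?_⟩
            have heq : S.wfun (T p) = (B / S.wfun p) * S.wfun p := by
              have h1 : S.wfun (T p) =
                  S.dual ((B / S.wfun p) • p.1) * (S.cone p.2.1 + S.nrm p.2.2) := rfl
              rw [h1, S.dual_smul (by positivity) p.1]
              have h2 : S.wfun p = S.dual p.1 * (S.cone p.2.1 + S.nrm p.2.2) := rfl
              rw [h2]; ring
            rw [heq]
            field_simp
        · exact Or.inl hW
      refine measure_mono_null hsub ?_
      have h1 : ν {p : Param N | p.2.1 ∉ S.W} = 0 :=
        (withDensity_absolutelyContinuous ρ _) hρnull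
      have h2 : ν {p : Param N | S.wfun p = 0} = 0 := by
        have hms : MeasurableSet {p : Param N | S.wfun p = 0} :=
          S.wfun_measurable (measurableSet_singleton 0)
        have h0 : ∫⁻ p in {p : Param N | S.wfun p = 0}, ((dens p : ℝ≥0) : ℝ≥0∞) ∂ρ
            = ∫⁻ _p in {p : Param N | S.wfun p = 0}, (0:ℝ≥0∞) ∂ρ := by
          refine setLIntegral_congr_fun hms (fun p hp => ?_)
          have hp' : S.wfun p = 0 := hp
          simp [hdenseq, hp']
        rw [hνdef, withDensity_apply _ hms, h0]
        simp
      refine le_antisymm (le_trans (measure_union_le _ _) ?_) (by simp)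
      rw [h1, h2]; simp
    -- representation transfer
    set g2 : Vec N → ℝ := fun x => ∫ p, S.neuron x p ∂ρ'' with hg2def
    have hncontp : ∀ x : Vec N, Continuous (fun p => S.neuron x p) := fun x =>
      S.neuron_continuous.comp (continuous_const.prodMk continuous_id)
    have hrep : ∀ x ∈ S.dom, g2 x = (B / C) * f x := by
      intro x hx
      have h1 : g2 x = ∫ p, S.neuron x (T p) ∂ν := by
        rw [hg2def]
        simp only
        rw [hρ''def]
        exact integral_map hTmeas.aemeasurable (hncontp x).aestronglyMeasurable
      have h2 : ∫ p, S.neuron x (T p) ∂ν = ∫ p, (dens p : ℝ≥0) • S.neuron x (T p) ∂ρ := by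
        rw [hνdef]
        exact integral_withDensity_eq_integral_smul hdensmeas _
      have h3 : ∀ᵐ p ∂ρ, (dens p : ℝ≥0) • S.neuron x (T p) = (B / C) * S.neuron x p := by
        refine hWae.mono fun p hp => ?_
        have hTn : S.neuron x (T p) = (B / S.wfun p) * S.neuron x p := by
          rw [hTdef]
          simp only
          have h := S.neuron_smul_fst x (B / S.wfun p) p.1 p.2.1 p.2.2
          simpa using h
        by_cases hw : S.wfun p = 0
        · have hn0 : S.neuron x p = 0 :=
            S.neuron_eq_zero hp (by rw [← S.wfun_eq_weight hp]; exact hw) x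
          rw [hTn, hn0]
          simp [hdensdef, hw]
        · have hwpos : 0 < S.wfun p := lt_of_le_of_ne (S.wfun_nonneg p) (Ne.symm hw)
          rw [hTn, hdensdef]
          simp only [NNReal.smul_def, Real.coe_toNNReal _ (by positivity : (0:ℝ) ≤ S.wfun p / C)]
          rw [smul_eq_mul]
          field_simp
      have h4 : ∫ p, (dens p : ℝ≥0) • S.neuron x (T p) ∂ρ = ∫ p, (B / C) * S.neuron x p ∂ρ :=
        integral_congr_ae h3
      have h5 : ∫ p, (B / C) * S.neuron x p ∂ρ = (B / C) * f x := by
        rw [integral_const_mul, ← (hρrep x hx).2]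
      rw [h1, h2, h4, h5]
    -- apply the sampling lemma
    obtain ⟨θ, hθG, herr⟩ := S.maurey μ ρ'' Gd hGdm hGdc B hGdprop M
    have herr' : ∫ x in S.dom, ((∑ m, S.neuron x (θ m)) - M * g2 x)^2 ∂μ ≤ M * B^2 := herr
    refine ⟨θ, fun m => (hGdprop _ (hθG m)).1, fun m => (hGdprop _ (hθG m)).2, ?_⟩
    -- error estimate
    set X : Vec N → ℝ := fun x => (M:ℝ)⁻¹ * ((∑ m, S.neuron x (θ m)) - M * g2 x) with hXdef
    set Y : Vec N → ℝ := fun x => g2 x - (C/B) * g2 x with hYdef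
    have hg2meas : Measurable g2 := by
      have h : StronglyMeasurable (Function.uncurry (fun (x : Vec N) (p : Param N) =>
          S.neuron x p)) := S.neuron_continuous.stronglyMeasurable
      exact h.integral_prod_right'.measurable
    have hnmeas : ∀ p : Param N, Measurable (fun x => S.neuron x p) := fun p =>
      (S.neuron_continuous.comp (continuous_id.prodMk continuous_const)).measurable
    have hXmeas : Measurable X := by
      apply Measurable.const_mul
      exact (Finset.measurable_sum _ fun m _ => hnmeas (θ m)).sub (measurable_const.mul hg2meas)
    have hYmeas : Measurable Y := hg2meas.sub (measurable_const.mul hg2meas)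
    -- bounds on the domain
    have hnae2 : ∀ x ∈ S.dom, ∀ᵐ p ∂ρ'', |S.neuron x p| ≤ B := by
      intro x hx
      refine ae_of_compl_subset ρ'' hGdc fun p hp hpG => ?_
      exact hp (le_trans (S.neuron_abs_le hx (hGdprop p hpG).1) (hGdprop p hpG).2)
    have hg2b : ∀ x ∈ S.dom, |g2 x| ≤ B := by
      intro x hx
      have h := norm_integral_le_of_norm_le_const (μ := ρ'') (f := fun p => S.neuron x p)
        (C := B) (by simpa [Real.norm_eq_abs] using hnae2 x hx)
      rw [hg2def]
      simpa [Real.norm_eq_abs, measure_univ] using h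
    have hnb2 : ∀ (m : Fin M), ∀ x ∈ S.dom, |S.neuron x (θ m)| ≤ B := fun m x hx =>
      le_trans (S.neuron_abs_le hx (hGdprop _ (hθG m)).1) (hGdprop _ (hθG m)).2
    have hXb : ∀ x ∈ S.dom, |X x| ≤ 2 * B := by
      intro x hx
      rw [hXdef]
      simp only
      rw [abs_mul, abs_of_nonneg (by positivity : (0:ℝ) ≤ (M:ℝ)⁻¹)]
      have h1 : |∑ m, S.neuron x (θ m)| ≤ M * B := by
        refine le_trans (Finset.abs_sum_le_sum_abs _ _) ?_
        calc ∑ m : Fin M, |S.neuron x (θ m)| ≤ ∑ _m : Fin M, B :=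
              Finset.sum_le_sum fun m _ => hnb2 m x hx
          _ = M * B := by simp [Finset.sum_const, nsmul_eq_mul]
      have h2 : |(M:ℝ) * g2 x| ≤ M * B := by
        rw [abs_mul, abs_of_nonneg (by positivity : (0:ℝ) ≤ (M:ℝ))]
        exact mul_le_mul_of_nonneg_left (hg2b x hx) (by positivity)
      have h3 : |(∑ m, S.neuron x (θ m)) - M * g2 x| ≤ M * B + M * B :=
        le_trans (abs_sub _ _) (add_le_add h1 h2)
      calc (M:ℝ)⁻¹ * |(∑ m, S.neuron x (θ m)) - M * g2 x|
          ≤ (M:ℝ)⁻¹ * (M * B + M * B) :=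
            mul_le_mul_of_nonneg_left h3 (by positivity)
        _ = 2 * B := by field_simp; ring
    have hYb : ∀ x ∈ S.dom, |Y x| ≤ η := by
      intro x hx
      rw [hYdef]
      simp only
      have heq : g2 x - (C/B) * g2 x = ((B - C)/B) * g2 x := by field_simp
      rw [heq, abs_mul]
      have h1 : |(B - C)/B| = (C - B)/B := by
        rw [abs_div, abs_of_pos hB, abs_of_nonpos (by linarith)]
        ring
      rw [h1]
      calc (C - B)/B * |g2 x| ≤ (C - B)/B * B :=
            mul_le_mul_of_nonneg_left (hg2b x hx) (div_nonneg (by linarith) hB.le)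
        _ = C - B := by field_simp
        _ ≤ η := by linarith
    -- measure-theoretic setup on the domain
    have hm2fin : (μ.restrict S.dom) Set.univ ≤ 1 := by
      rw [Measure.restrict_apply_univ]
      exact prob_le_one
    haveI : IsFiniteMeasure (μ.restrict S.dom) := by
      constructor; exact lt_of_le_of_lt hm2fin (by norm_num)
    have hm2one : ((μ.restrict S.dom) Set.univ).toReal ≤ 1 := by
      calc ((μ.restrict S.dom) Set.univ).toReal ≤ (1 : ℝ≥0∞).toReal :=
            ENNReal.toReal_mono (by norm_num) hm2fin
        _ = 1 := by simp
    have hIX : Integrable (fun x => (X x)^2) (μ.restrict S.dom) := by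
      refine integrable_of_bounded_ae (μ.restrict S.dom) ((hXmeas.pow_const 2)).aestronglyMeasurable
        (K := (2*B)^2) ?_
      refine (ae_restrict_mem hdm).mono fun x hx => ?_
      rw [abs_pow]
      exact pow_le_pow_left₀ (abs_nonneg _) (hXb x hx) 2
    have hIY : Integrable (fun x => (Y x)^2) (μ.restrict S.dom) := by
      refine integrable_of_bounded_ae (μ.restrict S.dom) ((hYmeas.pow_const 2)).aestronglyMeasurable
        (K := η^2) ?_
      refine (ae_restrict_mem hdm).mono fun x hx => ?_
      rw [abs_pow]
      exact pow_le_pow_left₀ (abs_nonneg _) (hYb x hx) 2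
    have hIXY : Integrable (fun x => (X x + Y x)^2) (μ.restrict S.dom) := by
      refine integrable_of_bounded_ae (μ.restrict S.dom) (((hXmeas.add hYmeas).pow_const 2)).aestronglyMeasurable
        (K := (2*B + η)^2) ?_
      refine (ae_restrict_mem hdm).mono fun x hx => ?_
      rw [abs_pow]
      refine pow_le_pow_left₀ (abs_nonneg _) ?_ 2
      exact le_trans (abs_add_le _ _) (add_le_add (hXb x hx) (hYb x hx))
    -- pointwise inequality
    have hpt : ∀ x, (X x + Y x)^2 ≤ (1 + ε/2) * (X x)^2 + (1 + 2/ε) * (Y x)^2 := by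
      intro x
      have h := add_sq_le_weighted (l := ε/2) (a := X x) (b := Y x) (by positivity)
      have h2 : 1 + 1/(ε/2) = 1 + 2/ε := by
        field_simp
      rw [h2] at h
      exact h
    -- identify the integrand on the domain
    have hintegrand : Set.EqOn (fun x => (S.netOut θ x - f x)^2)
        (fun x => (X x + Y x)^2) S.dom := by
      intro x hx
      have hfg : f x = (C/B) * g2 x := by
        rw [hrep x hx]
        field_simp
      have hlin : S.netOut θ x - f x = X x + Y x := by
        rw [hfg]
        show (M:ℝ)⁻¹ * (∑ m, S.neuron x (θ m)) - C/B * g2 x =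
          ((M:ℝ)⁻¹ * ((∑ m, S.neuron x (θ m)) - M * g2 x)) + (g2 x - (C/B) * g2 x)
        field_simp
        ring
      simp only
      rw [hlin]
    calc ∫ x in S.dom, (S.netOut θ x - f x)^2 ∂μ
        = ∫ x in S.dom, (X x + Y x)^2 ∂μ := setIntegral_congr_fun hdm hintegrand
      _ ≤ ∫ x in S.dom, ((1 + ε/2) * (X x)^2 + (1 + 2/ε) * (Y x)^2) ∂μ := by
          refine integral_mono_ae hIXY ?_ (Filter.Eventually.of_forall hpt)
          exact (hIX.const_mul _).add (hIY.const_mul _)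
      _ = (1 + ε/2) * (∫ x in S.dom, (X x)^2 ∂μ) + (1 + 2/ε) * (∫ x in S.dom, (Y x)^2 ∂μ) := by
          have hj1 : Integrable (fun x => (1 + ε/2) * (X x)^2) (μ.restrict S.dom) := by
            exact hIX.const_mul _
          have hj2 : Integrable (fun x => (1 + 2/ε) * (Y x)^2) (μ.restrict S.dom) := by
            exact hIY.const_mul _
          rw [integral_add hj1 hj2, integral_const_mul, integral_const_mul]
      _ ≤ (1 + ε/2) * (B^2 / M) + (1 + 2/ε) * η^2 := by
          have hx2 : ∫ x in S.dom, (X x)^2 ∂μ ≤ B^2 / M := by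
            have h1 : (fun x => (X x)^2) =
                fun x => ((M:ℝ)⁻¹)^2 * ((∑ m, S.neuron x (θ m)) - M * g2 x)^2 := by
              funext x
              rw [hXdef]
              simp only
              rw [mul_pow]
            calc ∫ x in S.dom, (X x)^2 ∂μ
                = ((M:ℝ)⁻¹)^2 * ∫ x in S.dom, ((∑ m, S.neuron x (θ m)) - M * g2 x)^2 ∂μ := by
                  rw [← integral_const_mul]
                  exact integral_congr_ae (Filter.Eventually.of_forall fun x => congrFun h1 x)
              _ ≤ ((M:ℝ)⁻¹)^2 * (M * B^2) :=
                  mul_le_mul_of_nonneg_left herr' (by positivity)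
              _ = B^2 / M := by field_simp
          have hy2 : ∫ x in S.dom, (Y x)^2 ∂μ ≤ η^2 := by
            calc ∫ x in S.dom, (Y x)^2 ∂μ ≤ ∫ _x in S.dom, η^2 ∂μ := by
                  refine integral_mono_ae hIY (integrable_const _) ?_
                  refine (ae_restrict_mem hdm).mono fun x hx => ?_
                  show (Y x)^2 ≤ η^2
                  rw [← sq_abs]
                  exact pow_le_pow_left₀ (abs_nonneg _) (hYb x hx) 2
              _ = η^2 * ((μ.restrict S.dom) Set.univ).toReal := by
                  rw [integral_const, smul_eq_mul, mul_comm]; rfl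
              _ ≤ η^2 := by nlinarith [hm2one, sq_nonneg η]
          have c1 : (0:ℝ) ≤ 1 + ε/2 := by positivity
          have c2 : (0:ℝ) ≤ 1 + 2/ε := by positivity
          exact add_le_add (mul_le_mul_of_nonneg_left hx2 c1) (mul_le_mul_of_nonneg_left hy2 c2)
      _ = (1 + ε) * B^2 / M := by
          rw [hη2]
          field_simp
          ring
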